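/- Let z₀, z₁ ∈ Ω and ε>0. Let w⁺_n(·; z₀) denote the exact WKB recursion with the + sign and base point z₀, and w⁻_n(·; z₁) the recursion with the − sign (kernel e^{−2(ζ−z)/ε}) and base point z₁; write w⁺_even(·;z₀), w⁺_odd(·;z₀), w⁻_even(·;z₁), w⁻_odd(·;z₁) for the corresponding even and odd sums. Then for every z ∈ Ω one has the identity w⁺_odd(z;z₀)·w⁻_odd(z;z₁) − w⁺_even(z;z₀)·w⁻_even(z;z₁) = −w⁺_even(z₁;z₀); in particular the left-hand side is independent of z. (This is the Wronskian formula W(u⁺(·;α,x₀), u⁻(·;α,x₁)) = 4i·w⁺_even(z₁;z₀) expressed in the z-variable.) -/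

import Mathlib

open Complex Filter Set intervalIntegral

noncomputable section

/-- The exact WKB recursion: `w 0 ≡ 1`; for odd index `2k+1`,
`w_{2k+1}(z) = ∫_{[z₀,z]} e^{s·2(ζ-z)/ε} ℋ(ζ) w_{2k}(ζ) dζ`, and for even index
`2k+2`, `w_{2k+2}(z) = ∫_{[z₀,z]} ℋ(ζ) w_{2k+1}(ζ) dζ`, all integrals along the
straight segment from `z₀` to `z` (parameterized by `t ∈ [0,1]`); the sign `±`
is encoded by `s = 1` or `s = -1`. -/
def wkbW (H : ℂ → ℂ) (z₀ : ℂ) (ε : ℝ) (s : ℂ) : ℕ → ℂ → ℂ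
  | 0 => fun _ => 1
  | n + 1 => fun z =>
      if n % 2 = 0 then
        (z - z₀) * ∫ t in (0:ℝ)..1,
          Complex.exp (s * 2 * ((z₀ + (t : ℂ) * (z - z₀)) - z) / (ε : ℂ)) *
            H (z₀ + (t : ℂ) * (z - z₀)) * wkbW H z₀ ε s n (z₀ + (t : ℂ) * (z - z₀))
      else
        (z - z₀) * ∫ t in (0:ℝ)..1,
          H (z₀ + (t : ℂ) * (z - z₀)) * wkbW H z₀ ε s n (z₀ + (t : ℂ) * (z - z₀))

/-- The even sum `w_even = Σ w_{2n}` of the exact WKB recursion. -/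
def wkbEven (H : ℂ → ℂ) (z₀ : ℂ) (ε : ℝ) (s : ℂ) (z : ℂ) : ℂ :=
  ∑' n : ℕ, wkbW H z₀ ε s (2 * n) z

/-- The odd sum `w_odd = Σ w_{2n+1}` of the exact WKB recursion. -/
def wkbOdd (H : ℂ → ℂ) (z₀ : ℂ) (ε : ℝ) (s : ℂ) (z : ℂ) : ℂ :=
  ∑' n : ℕ, wkbW H z₀ ε s (2 * n + 1) z

/-!
Differentiating the segment integrals gives `w'_{2k+1} = ℋ w_{2k} - (2s/ε) w_{2k+1}` and
`w'_{2k+2} = ℋ w_{2k+1}`. On a bounded domain with bounded `ℋ` the terms satisfy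
`|w_n| ≤ Cⁿ/n!`, so the sums can be differentiated termwise:
`w_even' = ℋ w_odd` and `w_odd' = ℋ w_even - (2s/ε) w_odd`. For the `+` system and the `-`
system the `∓ 2/ε` terms cancel in the derivative of `w⁺_odd w⁻_odd - w⁺_even w⁻_even`, so this
Wronskian is constant on the convex set `Ω`; at its base point `z₁` the `-` system has
`w⁻_odd = 0` and `w⁻_even = 1`.
-/

open Metric MeasureTheory
open scoped Nat

def segmentIntegral (f : ℂ → ℂ) (z₀ z : ℂ) : ℂ :=
  (z - z₀) * ∫ t in (0:ℝ)..1, f (z₀ + t * (z - z₀))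

section SegmentIntegral

variable {Ω : Set ℂ} {z₀ z : ℂ} {f : ℂ → ℂ}

lemma StarConvex.add_ofReal_mul_sub_mem (hΩ : StarConvex ℝ z₀ Ω) (hz : z ∈ Ω) {t : ℝ}
    (ht : t ∈ Icc (0:ℝ) 1) : z₀ + t * (z - z₀) ∈ Ω := by
  simpa [Complex.real_smul] using hΩ.add_smul_sub_mem hz ht.1 ht.2

lemma ContinuousOn.comp_segment (hf : ContinuousOn f Ω) (hΩ : StarConvex ℝ z₀ Ω) (hz : z ∈ Ω) :
    ContinuousOn (fun t : ℝ => f (z₀ + t * (z - z₀))) (Icc 0 1) :=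
  hf.comp (by fun_prop) fun _ ht => hΩ.add_ofReal_mul_sub_mem hz ht

lemma hasDerivAt_integral_comp_segment (hΩo : IsOpen Ω) (hΩ : StarConvex ℝ z₀ Ω)
    (hf : DifferentiableOn ℂ f Ω) (hz : z ∈ Ω) :
    HasDerivAt (fun w => ∫ t in (0:ℝ)..1, f (z₀ + t * (w - z₀)))
      (∫ t in (0:ℝ)..1, t * deriv f (z₀ + t * (z - z₀))) z := by
  obtain ⟨r, hr, hrΩ⟩ := nhds_basis_closedBall.mem_iff.mp (hΩo.mem_nhds hz)
  have hf' : ContinuousOn (deriv f) Ω := (hf.analyticOnNhd hΩo).deriv.continuousOn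
  obtain ⟨C, hC⟩ := (isCompact_closedBall z r).prod isCompact_Icc |>.exists_bound_of_continuousOn
    (f := fun p : ℂ × ℝ => deriv f (z₀ + p.2 * (p.1 - z₀)))
    (hf'.comp (by fun_prop) fun p hp => hΩ.add_ofReal_mul_sub_mem (hrΩ hp.1) hp.2)
  have hIoc : uIoc (0:ℝ) 1 = Ioc 0 1 := uIoc_of_le zero_le_one
  have hmeas : ∀ {g : ℝ → ℂ}, ContinuousOn g (Icc 0 1) →
      AEStronglyMeasurable g (volume.restrict (uIoc (0:ℝ) 1)) := fun hg => by
    rw [hIoc]; exact (hg.mono Ioc_subset_Icc_self).aestronglyMeasurable measurableSet_Ioc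
  refine (hasDerivAt_integral_of_dominated_loc_of_deriv_le
    (F := fun w t => f (z₀ + t * (w - z₀))) (F' := fun w t => t * deriv f (z₀ + t * (w - z₀)))
    (bound := fun _ => C)
    (ball_mem_nhds z hr) ?_ ?_ ?_ ?_ intervalIntegrable_const ?_).2
  · filter_upwards [ball_mem_nhds z hr] with w hw
    exact hmeas (hf.continuousOn.comp_segment hΩ (hrΩ (ball_subset_closedBall hw)))
  · exact (hf.continuousOn.comp_segment hΩ hz).intervalIntegrable_of_Icc (μ := volume) zero_le_one
  · exact hmeas (continuous_ofReal.continuousOn.mul (hf'.comp_segment hΩ hz))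
  · refine .of_forall fun t ht w hw => ?_
    rw [hIoc] at ht
    have htI : t ∈ Icc (0:ℝ) 1 := Ioc_subset_Icc_self ht
    calc ‖(t : ℂ) * deriv f (z₀ + t * (w - z₀))‖ ≤ 1 * C := by
          rw [norm_mul, Complex.norm_real, Real.norm_of_nonneg htI.1]
          exact mul_le_mul htI.2 (hC (w, t) ⟨ball_subset_closedBall hw, htI⟩)
            (norm_nonneg _) zero_le_one
      _ = C := one_mul C
  · refine .of_forall fun t ht w hw => ?_
    rw [hIoc] at ht
    have hmem := hΩ.add_ofReal_mul_sub_mem (hrΩ (ball_subset_closedBall hw))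
      (Ioc_subset_Icc_self ht)
    have hline : HasDerivAt (fun w : ℂ => z₀ + t * (w - z₀)) t w := by
      simpa using (((hasDerivAt_id w).sub_const z₀).const_mul (t : ℂ)).const_add z₀
    exact ((hf.differentiableAt (hΩo.mem_nhds hmem)).hasDerivAt.comp w hline).congr_deriv
      (mul_comm _ _)

lemma integral_comp_segment_add_mul_integral_deriv (hΩo : IsOpen Ω) (hΩ : StarConvex ℝ z₀ Ω)
    (hf : DifferentiableOn ℂ f Ω) (hz : z ∈ Ω) :
    (∫ t in (0:ℝ)..1, f (z₀ + t * (z - z₀))) +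
        (z - z₀) * ∫ t in (0:ℝ)..1, t * deriv f (z₀ + t * (z - z₀)) = f z := by
  have hf' : ContinuousOn (deriv f) Ω := (hf.analyticOnNhd hΩo).deriv.continuousOn
  have hderiv : ∀ t ∈ uIcc (0:ℝ) 1, HasDerivAt (fun t : ℝ => t * f (z₀ + t * (z - z₀)))
      (f (z₀ + t * (z - z₀)) + (z - z₀) * (t * deriv f (z₀ + t * (z - z₀)))) t := by
    intro t ht
    rw [uIcc_of_le zero_le_one] at ht
    have hmem := hΩ.add_ofReal_mul_sub_mem hz ht
    have hcast : HasDerivAt (fun t : ℝ => (t : ℂ)) 1 t := (hasDerivAt_id t).ofReal_comp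
    have hline := (hcast.mul_const (z - z₀)).const_add z₀
    have hf_t := (hf.differentiableAt (hΩo.mem_nhds hmem)).hasDerivAt.comp t hline
    exact (hcast.mul hf_t).congr_deriv (by simp only [Function.comp_apply]; ring)
  have hint1 :=
    (hf.continuousOn.comp_segment hΩ hz).intervalIntegrable_of_Icc (μ := volume) zero_le_one
  have hint2 : IntervalIntegrable (fun t : ℝ => (z - z₀) * (t * deriv f (z₀ + t * (z - z₀))))
      volume 0 1 :=
    (continuousOn_const.mul (continuous_ofReal.continuousOn.mul (hf'.comp_segment hΩ hz))
      ).intervalIntegrable_of_Icc zero_le_one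
  rw [← intervalIntegral.integral_const_mul, ← intervalIntegral.integral_add hint1 hint2,
    integral_eq_sub_of_hasDerivAt hderiv (hint1.add hint2)]
  simp

lemma hasDerivAt_segmentIntegral (hΩo : IsOpen Ω) (hΩ : StarConvex ℝ z₀ Ω)
    (hf : DifferentiableOn ℂ f Ω) (hz : z ∈ Ω) :
    HasDerivAt (segmentIntegral f z₀) (f z) z := by
  have := ((hasDerivAt_id z).sub_const z₀).mul (hasDerivAt_integral_comp_segment hΩo hΩ hf hz)
  rw [id_eq, one_mul, integral_comp_segment_add_mul_integral_deriv hΩo hΩ hf hz] at this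
  exact this

end SegmentIntegral

section Recursion

variable {Ω : Set ℂ} {H : ℂ → ℂ} {z₀ z : ℂ} {ε : ℝ} {s : ℂ} {n : ℕ}

lemma wkbW_succ_of_even (hn : Even n) (z : ℂ) :
    wkbW H z₀ ε s (n + 1) z = exp (-(s * 2 * z / ε)) *
      segmentIntegral (fun ζ => exp (s * 2 * ζ / ε) * (H ζ * wkbW H z₀ ε s n ζ)) z₀ z := by
  dsimp only [wkbW]
  rw [if_pos (Nat.even_iff.mp hn), segmentIntegral, mul_left_comm,
    ← intervalIntegral.integral_const_mul (exp (-(s * 2 * z / ε)))]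
  congr 1
  refine intervalIntegral.integral_congr fun t _ => ?_
  rw [← mul_assoc, ← mul_assoc, ← Complex.exp_add]
  ring_nf

lemma wkbW_succ_of_odd (hn : Odd n) :
    wkbW H z₀ ε s (n + 1) = segmentIntegral (fun ζ => H ζ * wkbW H z₀ ε s n ζ) z₀ := by
  ext z
  dsimp only [wkbW]
  rw [if_neg (Nat.not_even_iff_odd.mpr hn ∘ Nat.even_iff.mpr), segmentIntegral]

variable (hΩo : IsOpen Ω) (hΩ : StarConvex ℝ z₀ Ω) (hH : DifferentiableOn ℂ H Ω)
include hΩo hΩ hH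

lemma hasDerivAt_wkbW_succ_of_even (hn : Even n)
    (hw : DifferentiableOn ℂ (wkbW H z₀ ε s n) Ω) (hz : z ∈ Ω) :
    HasDerivAt (wkbW H z₀ ε s (n + 1))
      (H z * wkbW H z₀ ε s n z - s * 2 / ε * wkbW H z₀ ε s (n + 1) z) z := by
  have hexp : HasDerivAt (fun w : ℂ => exp (-(s * 2 * w / ε)))
      (exp (-(s * 2 * z / ε)) * -(s * 2 / ε)) z :=
    ((((hasDerivAt_id z).const_mul (s * 2)).div_const (ε : ℂ)).neg.congr_deriv (by ring)).cexp
  have hg : DifferentiableOn ℂ (fun ζ => exp (s * 2 * ζ / ε) * (H ζ * wkbW H z₀ ε s n ζ)) Ω :=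
    (by fun_prop : Differentiable ℂ fun ζ : ℂ => exp (s * 2 * ζ / ε)).differentiableOn.mul
      (hH.mul hw)
  have hprim := hasDerivAt_segmentIntegral hΩo hΩ hg hz
  rw [funext (wkbW_succ_of_even hn)]
  refine (hexp.mul hprim).congr_deriv ?_
  have hinv : exp (-(s * 2 * z / ε)) * exp (s * 2 * z / ε) = 1 := by
    rw [← Complex.exp_add, neg_add_cancel, Complex.exp_zero]
  linear_combination (H z * wkbW H z₀ ε s n z) * hinv

lemma hasDerivAt_wkbW_succ_of_odd (hn : Odd n)
    (hw : DifferentiableOn ℂ (wkbW H z₀ ε s n) Ω) (hz : z ∈ Ω) :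
    HasDerivAt (wkbW H z₀ ε s (n + 1)) (H z * wkbW H z₀ ε s n z) z := by
  rw [wkbW_succ_of_odd hn]
  exact hasDerivAt_segmentIntegral hΩo hΩ (hH.mul hw) hz

lemma differentiableOn_wkbW : ∀ n, DifferentiableOn ℂ (wkbW H z₀ ε s n) Ω
  | 0 => differentiableOn_const 1
  | n + 1 => fun _ hz => by
    have hw := differentiableOn_wkbW n
    rcases n.even_or_odd with hn | hn
    · exact (hasDerivAt_wkbW_succ_of_even hΩo hΩ hH hn hw hz).differentiableAt
        |>.differentiableWithinAt
    · exact (hasDerivAt_wkbW_succ_of_odd hΩo hΩ hH hn hw hz).differentiableAt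
        |>.differentiableWithinAt

end Recursion

lemma norm_mul_integral_le_pow_div_factorial {w : ℂ} {g : ℝ → ℂ} {A : ℝ} (n : ℕ)
    (hg : ∀ t ∈ Ioc (0:ℝ) 1, ‖g t‖ ≤ A * (A * (t * ‖w‖)) ^ n / n !) :
    ‖w * ∫ t in (0:ℝ)..1, g t‖ ≤ (A * ‖w‖) ^ (n + 1) / (n + 1)! := by
  set c := A * (A * ‖w‖) ^ n / (n !)
  have hc : ∀ t : ℝ, A * (A * (t * ‖w‖)) ^ n / n ! = c * t ^ n := fun t => by ring
  have hint : ∫ t in (0:ℝ)..1, c * t ^ n = c / (n + 1) := by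
    rw [intervalIntegral.integral_const_mul, integral_pow]
    norm_num
    ring
  calc ‖w * ∫ t in (0:ℝ)..1, g t‖ ≤ ‖w‖ * (c / (n + 1)) := by
        rw [norm_mul, ← hint]
        gcongr
        refine intervalIntegral.norm_integral_le_of_norm_le zero_le_one
          (.of_forall fun t ht => (hg t ht).trans_eq (hc t)) ?_
        exact (continuous_const.mul (continuous_pow n)).intervalIntegrable 0 1
    _ = (A * ‖w‖) ^ (n + 1) / (n + 1)! := by
        rw [Nat.factorial_succ, Nat.cast_mul, Nat.cast_succ]
        simp only [c]
        field_simp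
        ring

section Bounds

variable {Ω : Set ℂ} {H : ℂ → ℂ} {z₀ : ℂ} {ε : ℝ} {s : ℂ}

lemma norm_wkbW_le {A : ℝ} (hΩ : StarConvex ℝ z₀ Ω)
    (hker : ∀ z ∈ Ω, ∀ ζ ∈ Ω, ‖exp (s * 2 * (ζ - z) / ε) * H ζ‖ ≤ A)
    (hHA : ∀ ζ ∈ Ω, ‖H ζ‖ ≤ A) :
    ∀ n, ∀ z ∈ Ω, ‖wkbW H z₀ ε s n z‖ ≤ (A * ‖z - z₀‖) ^ n / n ! := by
  intro n
  induction n with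
  | zero => simp [wkbW]
  | succ n ih =>
    intro z hz
    have hA : 0 ≤ A := (norm_nonneg _).trans (hHA z hz)
    have hstep : ∀ c : ℝ → ℂ, (∀ t ∈ Ioc (0:ℝ) 1, ‖c t‖ ≤ A) →
        ‖(z - z₀) * ∫ t in (0:ℝ)..1, c t * wkbW H z₀ ε s n (z₀ + t * (z - z₀))‖ ≤
          (A * ‖z - z₀‖) ^ (n + 1) / (n + 1)! := by
      refine fun c hc => norm_mul_integral_le_pow_div_factorial n fun t ht => ?_
      have hmem := hΩ.add_ofReal_mul_sub_mem hz (Ioc_subset_Icc_self ht)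
      have hdist : ‖z₀ + t * (z - z₀) - z₀‖ = t * ‖z - z₀‖ := by
        rw [add_sub_cancel_left, norm_mul, Complex.norm_real, Real.norm_of_nonneg ht.1.le]
      rw [norm_mul, mul_div_assoc, ← hdist]
      exact mul_le_mul (hc t ht) (ih _ hmem) (norm_nonneg _) hA
    dsimp only [wkbW]
    split_ifs
    · exact hstep _ fun t ht => hker z hz _ (hΩ.add_ofReal_mul_sub_mem hz (Ioc_subset_Icc_self ht))
    · exact hstep _ fun t ht => hHA _ (hΩ.add_ofReal_mul_sub_mem hz (Ioc_subset_Icc_self ht))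

lemma norm_cexp_le_of_norm_sub_le {D : ℝ} {ζ z : ℂ} (h : ‖ζ - z‖ ≤ D) :
    ‖exp (s * 2 * (ζ - z) / ε)‖ ≤ Real.exp (‖s‖ * 2 * D / |ε|) := by
  refine (norm_exp_le_exp_norm _).trans (Real.exp_le_exp.mpr ?_)
  rw [norm_div, norm_mul, norm_mul, Complex.norm_real, Real.norm_eq_abs, Complex.norm_two]
  gcongr

lemma exists_norm_wkbW_le_pow_div_factorial (hΩ : StarConvex ℝ z₀ Ω) (hΩb : Bornology.IsBounded Ω)
    (hH : ∃ M, ∀ ζ ∈ Ω, ‖H ζ‖ ≤ M) :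
    ∃ C, ∀ n, ∀ z ∈ Ω, ‖wkbW H z₀ ε s n z‖ ≤ C ^ n / n ! := by
  obtain ⟨M, hM⟩ := hH
  obtain ⟨D, hD⟩ := isBounded_iff.mp hΩb
  set K := Real.exp (‖s‖ * 2 * D / |ε|)
  refine ⟨K * M * D, fun n z hz => ?_⟩
  have hz₀ : z₀ ∈ Ω := hΩ.mem ⟨z, hz⟩
  have hD₀ : 0 ≤ D := dist_nonneg.trans (hD hz₀ hz₀)
  have hK : 1 ≤ K := Real.one_le_exp (by positivity)
  have hM₀ : 0 ≤ M := (norm_nonneg _).trans (hM z₀ hz₀)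
  have hker : ∀ z ∈ Ω, ∀ ζ ∈ Ω, ‖exp (s * 2 * (ζ - z) / ε) * H ζ‖ ≤ K * M := fun z hz ζ hζ =>
    norm_mul_le_of_le (norm_cexp_le_of_norm_sub_le (dist_eq_norm ζ z ▸ hD hζ hz)) (hM ζ hζ)
  have hHKM : ∀ ζ ∈ Ω, ‖H ζ‖ ≤ K * M := fun ζ hζ => (hM ζ hζ).trans (le_mul_of_one_le_left hM₀ hK)
  refine (norm_wkbW_le hΩ hker hHKM n z hz).trans ?_
  gcongr
  exact dist_eq_norm z z₀ ▸ hD hz hz₀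

end Bounds

section Sums

variable {Ω : Set ℂ} {H : ℂ → ℂ} {z₀ z : ℂ} {ε : ℝ} {s : ℂ}

lemma wkbW_succ_self (n : ℕ) : wkbW H z₀ ε s (n + 1) z₀ = 0 := by
  dsimp only [wkbW]
  split_ifs <;> simp

lemma wkbOdd_self : wkbOdd H z₀ ε s z₀ = 0 := by
  simp [wkbOdd, wkbW_succ_self]

lemma wkbEven_self : wkbEven H z₀ ε s z₀ = 1 :=
  tsum_eq_single 0 fun n hn => by
    obtain ⟨m, rfl⟩ := Nat.exists_eq_succ_of_ne_zero hn
    exact wkbW_succ_self (2 * m + 1)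

variable {C M : ℝ} (hC : ∀ n, ∀ z ∈ Ω, ‖wkbW H z₀ ε s n z‖ ≤ C ^ n / n !)
include hC

lemma summable_wkbW_comp {k : ℕ → ℕ} (hk : k.Injective) (hz : z ∈ Ω) :
    Summable fun n => wkbW H z₀ ε s (k n) z :=
  ((Real.summable_pow_div_factorial C).comp_injective hk).of_norm_bounded fun n => hC (k n) z hz

variable (hΩo : IsOpen Ω) (hΩ : StarConvex ℝ z₀ Ω) (hH : DifferentiableOn ℂ H Ω)
  (hM : ∀ ζ ∈ Ω, ‖H ζ‖ ≤ M)
include hΩo hΩ hH hM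

lemma hasDerivAt_wkbOdd (hz : z ∈ Ω) :
    HasDerivAt (wkbOdd H z₀ ε s) (H z * wkbEven H z₀ ε s z - s * 2 / ε * wkbOdd H z₀ ε s z) z := by
  have hpre : IsPreconnected Ω := (hΩ.isPathConnected (hΩ.mem ⟨z, hz⟩)).isConnected.isPreconnected
  have hu : Summable fun n => M * (C ^ (2 * n) / (2 * n)!) +
      ‖s * 2 / ε‖ * (C ^ (2 * n + 1) / (2 * n + 1)!) :=
    (((Real.summable_pow_div_factorial C).comp_injective fun a b h => by omega).mul_left M).add
      (((Real.summable_pow_div_factorial C).comp_injective fun a b h => by omega).mul_left _)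
  have hderiv := hasDerivAt_tsum_of_isPreconnected hu hΩo hpre
    (g := fun n => wkbW H z₀ ε s (2 * n + 1))
    (g' := fun n y => H y * wkbW H z₀ ε s (2 * n) y - s * 2 / ε * wkbW H z₀ ε s (2 * n + 1) y)
    (fun n y hy => hasDerivAt_wkbW_succ_of_even hΩo hΩ hH (even_two_mul n)
      (differentiableOn_wkbW hΩo hΩ hH _) hy)
    (fun n y hy => (norm_sub_le _ _).trans (add_le_add (norm_mul_le_of_le (hM y hy) (hC _ y hy))
      (norm_mul_le_of_le le_rfl (hC _ y hy))))
    hz (summable_wkbW_comp hC (fun a b h => by omega) hz) hz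
  rwa [Summable.tsum_sub ((summable_wkbW_comp hC (fun a b h => by omega) hz).mul_left _)
    ((summable_wkbW_comp hC (fun a b h => by omega) hz).mul_left _),
    tsum_mul_left, tsum_mul_left] at hderiv

lemma hasDerivAt_wkbEven (hz : z ∈ Ω) :
    HasDerivAt (wkbEven H z₀ ε s) (H z * wkbOdd H z₀ ε s z) z := by
  have hpre : IsPreconnected Ω := (hΩ.isPathConnected (hΩ.mem ⟨z, hz⟩)).isConnected.isPreconnected
  have hu : Summable fun n => M * (C ^ (2 * n + 1) / (2 * n + 1)!) :=
    ((Real.summable_pow_div_factorial C).comp_injective fun a b h => by omega).mul_left M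
  have htail := hasDerivAt_tsum_of_isPreconnected hu hΩo hpre
    (g := fun n => wkbW H z₀ ε s (2 * n + 2))
    (g' := fun n y => H y * wkbW H z₀ ε s (2 * n + 1) y)
    (fun n y hy => hasDerivAt_wkbW_succ_of_odd hΩo hΩ hH (odd_two_mul_add_one n)
      (differentiableOn_wkbW hΩo hΩ hH _) hy)
    (fun n y hy => norm_mul_le_of_le (hM y hy) (hC _ y hy))
    hz (summable_wkbW_comp hC (fun a b h => by omega) hz) hz
  rw [tsum_mul_left] at htail
  refine (htail.const_add 1).congr_of_eventuallyEq ?_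
  filter_upwards [hΩo.mem_nhds hz] with y hy
  exact (summable_wkbW_comp hC (k := (2 * ·)) (mul_right_injective₀ two_ne_zero) hy
    ).tsum_eq_zero_add

end Sums

theorem wkb_wronskian_identity_general
    (Ω : Set ℂ) (hΩopen : IsOpen Ω) (hΩbdd : Bornology.IsBounded Ω)
    (hΩconv : Convex ℝ Ω)
    (H : ℂ → ℂ) (hH : DifferentiableOn ℂ H Ω)
    (hHbdd : ∃ M, ∀ ζ ∈ Ω, ‖H ζ‖ ≤ M)
    (z₀ z₁ : ℂ) (hz₀ : z₀ ∈ Ω) (hz₁ : z₁ ∈ Ω)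
    (ε : ℝ) :
    ∀ z ∈ Ω,
      wkbOdd H z₀ ε 1 z * wkbOdd H z₁ ε (-1) z -
          wkbEven H z₀ ε 1 z * wkbEven H z₁ ε (-1) z =
        -wkbEven H z₀ ε 1 z₁ := by
  obtain ⟨M, hM⟩ := hHbdd
  obtain ⟨C₀, hC₀⟩ := exists_norm_wkbW_le_pow_div_factorial (ε := ε) (s := 1)
    (hΩconv hz₀) hΩbdd ⟨M, hM⟩
  obtain ⟨C₁, hC₁⟩ := exists_norm_wkbW_le_pow_div_factorial (ε := ε) (s := -1)
    (hΩconv hz₁) hΩbdd ⟨M, hM⟩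
  set W : ℂ → ℂ := fun z => wkbOdd H z₀ ε 1 z * wkbOdd H z₁ ε (-1) z -
    wkbEven H z₀ ε 1 z * wkbEven H z₁ ε (-1) z
  have hW : ∀ z ∈ Ω, HasDerivAt W 0 z := fun z hz =>
    (((hasDerivAt_wkbOdd hC₀ hΩopen (hΩconv hz₀) hH hM hz).mul
      (hasDerivAt_wkbOdd hC₁ hΩopen (hΩconv hz₁) hH hM hz)).sub
      ((hasDerivAt_wkbEven hC₀ hΩopen (hΩconv hz₀) hH hM hz).mul
      (hasDerivAt_wkbEven hC₁ hΩopen (hΩconv hz₁) hH hM hz))).congr_deriv (by ring)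
  intro z hz
  calc W z = W z₁ := hΩopen.is_const_of_deriv_eq_zero hΩconv.isPreconnected
        (fun w hw => (hW w hw).differentiableAt.differentiableWithinAt)
        (fun w hw => (hW w hw).deriv) hz hz₁
    _ = -wkbEven H z₀ ε 1 z₁ := by simp [W, wkbOdd_self, wkbEven_self]

/-- The Wronskian identity for exact WKB solutions: for the `+`
recursion based at `z₀` and the `-` recursion based at `z₁`,
`w⁺_odd(z;z₀) w⁻_odd(z;z₁) - w⁺_even(z;z₀) w⁻_even(z;z₁) = -w⁺_even(z₁;z₀)`
for every `z ∈ Ω`; in particular the left-hand side is independent of `z`. -/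
theorem wkb_wronskian_identity
    (Ω : Set ℂ) (hΩopen : IsOpen Ω) (hΩbdd : Bornology.IsBounded Ω)
    (hΩconv : Convex ℝ Ω)
    (H : ℂ → ℂ) (hH : DifferentiableOn ℂ H Ω)
    (hHbdd : ∃ M, ∀ ζ ∈ Ω, ‖H ζ‖ ≤ M)
    (z₀ z₁ : ℂ) (hz₀ : z₀ ∈ Ω) (hz₁ : z₁ ∈ Ω)
    (ε : ℝ) (hε : 0 < ε) :
    ∀ z ∈ Ω,
      wkbOdd H z₀ ε 1 z * wkbOdd H z₁ ε (-1) z -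
          wkbEven H z₀ ε 1 z * wkbEven H z₁ ε (-1) z =
        -wkbEven H z₀ ε 1 z₁ :=
  wkb_wronskian_identity_general Ω hΩopen hΩbdd hΩconv H hH hHbdd z₀ z₁ hz₀ hz₁ ε
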